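/- Suppose Û = Θ X for a linear projection Θ, and Φ is a linear interpolation operator such that Cov(X - ΦÛ, Û) = 0 and Cov(Û,Û) = Cov(U,U), with U uncorrelated with X and Û and E[U]=E[Û]. Then the optimal gain for Z = X - S(Û - U) is S = (1/2)Φ. -/

import Mathlib

/-!
Since `X - ΦÛ` is uncorrelated with `Û` and covariance is bilinear, `Cov(X,Û) = Φ Cov(Û,Û)`.
With `C = Cov(Û,Û) = Cov(U,U)` the gain is `Φ C (C + C)⁻¹ = Φ C (2C)⁻¹ = ½ Φ`.
-/

open MeasureTheory Matrix

/-- Component-wise mean of a random vector. -/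
noncomputable def rmean {Ω : Type*} [MeasureSpace Ω] {ι : Type*}
    (X : Ω → ι → ℝ) : ι → ℝ := fun i => ∫ ω, X ω i

/-- Covariance matrix of two random vectors. -/
noncomputable def rcov {Ω : Type*} [MeasureSpace Ω] {ι κ : Type*}
    (X : Ω → ι → ℝ) (Y : Ω → κ → ℝ) : Matrix ι κ ℝ :=
  Matrix.of fun i j => ∫ ω, (X ω i - rmean X i) * (Y ω j - rmean Y j)

section Moments

variable {Ω : Type*} [MeasureSpace Ω] {ι κ ν : Type*}

lemma memLp_mulVec_apply [Fintype κ] {p : ENNReal} {Y : Ω → κ → ℝ}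
    (hY : ∀ k, MemLp (fun ω => Y ω k) p) (A : Matrix ι κ ℝ) (i : ι) :
    MemLp (fun ω => (A *ᵥ Y ω) i) p := by
  simpa only [mulVec, dotProduct] using
    memLp_finsetSum Finset.univ fun k _ => (hY k).const_mul (A i k)

lemma rmean_sub {X Y : Ω → ι → ℝ} (hX : ∀ i, Integrable fun ω => X ω i)
    (hY : ∀ i, Integrable fun ω => Y ω i) :
    rmean (fun ω => X ω - Y ω) = rmean X - rmean Y :=
  funext fun i => integral_sub (hX i) (hY i)

lemma rmean_mulVec [Fintype κ] {Y : Ω → κ → ℝ} (hY : ∀ k, Integrable fun ω => Y ω k)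
    (A : Matrix ι κ ℝ) :
    rmean (fun ω => A *ᵥ Y ω) = A *ᵥ rmean Y := by
  funext i
  simp only [rmean, mulVec, dotProduct]
  rw [integral_finsetSum _ fun k _ => (hY k).const_mul (A i k)]
  simp only [integral_const_mul]

variable [IsFiniteMeasure (volume : Measure Ω)]

lemma integrable_sub_const_mul_sub_const {f g : Ω → ℝ} (hf : MemLp f 2) (hg : MemLp g 2)
    (a b : ℝ) : Integrable fun ω => (f ω - a) * (g ω - b) :=
  (hf.sub (memLp_const a)).integrable_mul (hg.sub (memLp_const b))

lemma rcov_sub_left {X Y : Ω → ι → ℝ} {Z : Ω → ν → ℝ} (hX : ∀ i, MemLp (fun ω => X ω i) 2)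
    (hY : ∀ i, MemLp (fun ω => Y ω i) 2) (hZ : ∀ j, MemLp (fun ω => Z ω j) 2) :
    rcov (fun ω => X ω - Y ω) Z = rcov X Z - rcov Y Z := by
  ext i j
  simp only [rcov, Matrix.sub_apply, of_apply]
  rw [rmean_sub (fun i => (hX i).integrable one_le_two) (fun i => (hY i).integrable one_le_two),
    ← integral_sub (integrable_sub_const_mul_sub_const (hX i) (hZ j) _ _)
      (integrable_sub_const_mul_sub_const (hY i) (hZ j) _ _)]
  congr 1 with ω
  simp only [Pi.sub_apply]
  ring

lemma rcov_mulVec_left [Fintype κ] {Y : Ω → κ → ℝ} {Z : Ω → ν → ℝ}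
    (hY : ∀ k, MemLp (fun ω => Y ω k) 2) (hZ : ∀ j, MemLp (fun ω => Z ω j) 2)
    (A : Matrix ι κ ℝ) :
    rcov (fun ω => A *ᵥ Y ω) Z = A * rcov Y Z := by
  ext i j
  simp only [rcov, of_apply, mul_apply, ← integral_const_mul]
  rw [rmean_mulVec (fun k => (hY k).integrable one_le_two),
    ← integral_finsetSum _ fun k _ =>
      (integrable_sub_const_mul_sub_const (hY k) (hZ j) _ _).const_mul (A i k)]
  congr 1 with ω
  simp only [mulVec, dotProduct, ← Finset.sum_sub_distrib, Finset.sum_mul, ← mul_sub]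
  exact Finset.sum_congr rfl fun k _ => by ring

end Moments

lemma Matrix.mul_mul_inv_add_self {m n K : Type*} [Fintype n] [DecidableEq n] [Field K]
    (h2 : (2 : K) ≠ 0) (Φ : Matrix m n K) {C : Matrix n n K} (hC : IsUnit C) :
    Φ * C * (C + C)⁻¹ = (1 / 2 : K) • Φ := by
  have hdet : IsUnit C.det := (isUnit_iff_isUnit_det C).mp hC
  have hhalf : (C + C)⁻¹ = (1 / 2 : K) • C⁻¹ := by
    refine inv_eq_left_inv ?_
    rw [smul_mul, Matrix.mul_add, nonsing_inv_mul C hdet, ← two_smul K, smul_smul,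
      one_div_mul_cancel h2, one_smul]
  rw [hhalf, Matrix.mul_smul, Matrix.mul_assoc, mul_nonsing_inv C hdet, Matrix.mul_one]

theorem optimal_gain_half_interpolation_general
    {Ω : Type*} [MeasureSpace Ω] [IsProbabilityMeasure (volume : Measure Ω)]
    {n r : ℕ} (X : Ω → Fin n → ℝ) (U : Ω → Fin r → ℝ)
    (Θ : Matrix (Fin r) (Fin n) ℝ) (Φ : Matrix (Fin n) (Fin r) ℝ)
    (Uhat : Ω → Fin r → ℝ) (hUhatdef : ∀ ω, Uhat ω = Θ.mulVec (X ω))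
    (hX : ∀ i, MemLp (fun ω => X ω i) 2)
    (hcoveq : rcov Uhat Uhat = rcov U U)
    (hres : rcov (fun ω => X ω - Φ.mulVec (Uhat ω)) Uhat = 0)
    (hinv : IsUnit (rcov Uhat Uhat)) :
    rcov X Uhat * (rcov Uhat Uhat + rcov U U)⁻¹ = (1 / 2 : ℝ) • Φ := by
  have hUhat : ∀ i, MemLp (fun ω => Uhat ω i) 2 := by
    simpa only [hUhatdef] using memLp_mulVec_apply hX Θ
  have hcross : rcov X Uhat = Φ * rcov Uhat Uhat := by
    rw [rcov_sub_left hX (memLp_mulVec_apply hUhat Φ) hUhat, rcov_mulVec_left hUhat hUhat]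
      at hres
    exact sub_eq_zero.mp hres
  rw [hcross, ← hcoveq, mul_mul_inv_add_self two_ne_zero Φ hinv]

/-- **Theorem 3.1 (optimal gain is half the interpolation operator).**
If `Û = ΘX`, the residual `X - ΦÛ` is uncorrelated with `Û`, and
`Cov(Û,Û) = Cov(U,U)`, then the optimal gain
`S = Cov(X,Û)(Cov(Û,Û)+Cov(U,U))⁻¹` equals `(1/2)Φ`. -/
theorem optimal_gain_half_interpolation
    {Ω : Type*} [MeasureSpace Ω] [IsProbabilityMeasure (volume : Measure Ω)]
    {n r : ℕ} (X : Ω → Fin n → ℝ) (U : Ω → Fin r → ℝ)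
    (Θ : Matrix (Fin r) (Fin n) ℝ) (Φ : Matrix (Fin n) (Fin r) ℝ)
    (Uhat : Ω → Fin r → ℝ) (hUhatdef : ∀ ω, Uhat ω = Θ.mulVec (X ω))
    (hX : ∀ i, MemLp (fun ω => X ω i) 2)
    (hU : ∀ i, MemLp (fun ω => U ω i) 2)
    (hmean : rmean U = rmean Uhat)
    (hUX : rcov U X = 0) (hUUhat : rcov U Uhat = 0)
    (hcoveq : rcov Uhat Uhat = rcov U U)
    (hres : rcov (fun ω => X ω - Φ.mulVec (Uhat ω)) Uhat = 0)
    (hinv : IsUnit (rcov Uhat Uhat)) :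
    rcov X Uhat * (rcov Uhat Uhat + rcov U U)⁻¹ = (1 / 2 : ℝ) • Φ :=
  optimal_gain_half_interpolation_general X U Θ Φ Uhat hUhatdef hX hcoveq hres hinv
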